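/- arXiv:1311.2186 — 2 statements merged into one kernel-verified Lean document; each statement's English description precedes it below -/
import Mathlib

section
/- Let Ω ⊂ ℝ³ be a bounded Lipschitz domain with connected boundary, so that there are no harmonic Dirichlet fields. Then the tangential Maxwell constant satisfies c_{m,t} ≥ c_{p,∘}, the Poincaré constant of H¹₀(Ω). -/
open MeasureTheory Matrix Real

noncomputable section

abbrev Vec3 := Fin 3 → ℝ

/-- partial derivative ∂ⱼ f -/
def pd3 (j : Fin 3) (f : Vec3 → ℝ) (x : Vec3) : ℝ := fderiv ℝ f x (Pi.single j 1)

def grad3 (f : Vec3 → ℝ) (x : Vec3) : Vec3 := fun j => pd3 j f x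

def div3 (v : Vec3 → Vec3) (x : Vec3) : ℝ := ∑ j, pd3 j (fun y => v y j) x

def curl3 (v : Vec3 → Vec3) (x : Vec3) : Vec3 :=
  ![pd3 1 (fun y => v y 2) x - pd3 2 (fun y => v y 1) x,
    pd3 2 (fun y => v y 0) x - pd3 0 (fun y => v y 2) x,
    pd3 0 (fun y => v y 1) x - pd3 1 (fun y => v y 0) x]

/-- weak curl on Ω (test fields compactly supported inside Ω): `c = curl E` distributionally. -/
def WeakCurl3 (Ω : Set Vec3) (E c : Vec3 → Vec3) : Prop :=
  ∀ φ : Vec3 → Vec3, ContDiff ℝ (⊤ : ℕ∞) φ → HasCompactSupport φ → tsupport φ ⊆ Ω →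
    ∫ x in Ω, E x ⬝ᵥ curl3 φ x = ∫ x in Ω, c x ⬝ᵥ φ x

/-- weak curl together with vanishing tangential trace (integration by parts holds
against all test fields, not only those supported in Ω): `E ∈ H(curl)∘` with `curl E = c`. -/
def WeakCurlTT3 (Ω : Set Vec3) (E c : Vec3 → Vec3) : Prop :=
  ∀ φ : Vec3 → Vec3, ContDiff ℝ (⊤ : ℕ∞) φ → HasCompactSupport φ →
    ∫ x in Ω, E x ⬝ᵥ curl3 φ x = ∫ x in Ω, c x ⬝ᵥ φ x

/-- weak divergence on Ω: `d = div v` distributionally. -/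
def WeakDiv3 (Ω : Set Vec3) (v : Vec3 → Vec3) (d : Vec3 → ℝ) : Prop :=
  ∀ φ : Vec3 → ℝ, ContDiff ℝ (⊤ : ℕ∞) φ → HasCompactSupport φ → tsupport φ ⊆ Ω →
    ∫ x in Ω, v x ⬝ᵥ grad3 φ x = - ∫ x in Ω, d x * φ x

/-- weak divergence with vanishing normal trace: `v ∈ H(div)∘` with `div v = d`. -/
def WeakDivNT3 (Ω : Set Vec3) (v : Vec3 → Vec3) (d : Vec3 → ℝ) : Prop :=
  ∀ φ : Vec3 → ℝ, ContDiff ℝ (⊤ : ℕ∞) φ → HasCompactSupport φ →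
    ∫ x in Ω, v x ⬝ᵥ grad3 φ x = - ∫ x in Ω, d x * φ x

/-- weak gradient on Ω: `g = ∇u` distributionally. -/
def WeakGrad3 (Ω : Set Vec3) (u : Vec3 → ℝ) (g : Vec3 → Vec3) : Prop :=
  ∀ φ : Vec3 → ℝ, ContDiff ℝ (⊤ : ℕ∞) φ → HasCompactSupport φ → tsupport φ ⊆ Ω →
    ∀ j, ∫ x in Ω, u x * pd3 j φ x = - ∫ x in Ω, g x j * φ x

/-- admissible constants in the Poincaré inequality for H¹₀(Ω) (stated on the dense
subspace C_c^∞(Ω)); the least element is the Poincaré constant c_{p,∘}. -/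
def PoinZ3 (Ω : Set Vec3) : Set ℝ :=
  {c | 0 ≤ c ∧ ∀ φ : Vec3 → ℝ, ContDiff ℝ (⊤ : ℕ∞) φ → HasCompactSupport φ → tsupport φ ⊆ Ω →
    (∫ x in Ω, φ x ^ 2) ≤ c ^ 2 * ∫ x in Ω, grad3 φ x ⬝ᵥ grad3 φ x}

/-- admissible constants in the Poincaré inequality for mean-zero H¹(Ω) (stated on the
dense subspace of smooth functions); the least element is the Poincaré constant c_p. -/
def PoinM3 (Ω : Set Vec3) : Set ℝ :=
  {c | 0 ≤ c ∧ ∀ u : Vec3 → ℝ, ContDiff ℝ (⊤ : ℕ∞) u → (∫ x in Ω, u x) = 0 →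
    (∫ x in Ω, u x ^ 2) ≤ c ^ 2 * ∫ x in Ω, grad3 u x ⬝ᵥ grad3 u x}

/-- ε is symmetric and uniformly positive definite with bounds εl⁻² ≤ ε ≤ εu². -/
def EpsBounds3 (Ω : Set Vec3) (ε : Vec3 → Matrix (Fin 3) (Fin 3) ℝ) (εl εu : ℝ) : Prop :=
  ∀ x ∈ Ω, (ε x)ᵀ = ε x ∧ ∀ v : Fin 3 → ℝ,
    εl⁻¹ ^ 2 * (v ⬝ᵥ v) ≤ (ε x *ᵥ v) ⬝ᵥ v ∧ (ε x *ᵥ v) ⬝ᵥ v ≤ εu ^ 2 * (v ⬝ᵥ v)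

/-- admissible tangential Maxwell constants (ε = id): ‖E‖ ≤ c (‖curl E‖² + ‖div E‖²)^{1/2}
for all E ∈ H(curl)∘ ∩ H(div); the least one is c_{m,t}. -/
def MaxTSet (Ω : Set Vec3) : Set ℝ :=
  {c | 0 ≤ c ∧ ∀ (E cE : Vec3 → Vec3) (d : Vec3 → ℝ),
    Integrable (fun x => E x ⬝ᵥ E x) (volume.restrict Ω) →
    Integrable (fun x => cE x ⬝ᵥ cE x) (volume.restrict Ω) →
    Integrable (fun x => d x ^ 2) (volume.restrict Ω) →
    WeakCurlTT3 Ω E cE → WeakDiv3 Ω E d →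
    sqrt (∫ x in Ω, E x ⬝ᵥ E x) ≤
      c * sqrt ((∫ x in Ω, cE x ⬝ᵥ cE x) + ∫ x in Ω, d x ^ 2)}

/-- admissible normal Maxwell constants (ε = id): ‖H‖ ≤ c (‖curl H‖² + ‖div H‖²)^{1/2}
for all H ∈ H(curl) ∩ H(div)∘; the least one is c_{m,n}. -/
def MaxNSet (Ω : Set Vec3) : Set ℝ :=
  {c | 0 ≤ c ∧ ∀ (H cH : Vec3 → Vec3) (d : Vec3 → ℝ),
    Integrable (fun x => H x ⬝ᵥ H x) (volume.restrict Ω) →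
    Integrable (fun x => cH x ⬝ᵥ cH x) (volume.restrict Ω) →
    Integrable (fun x => d x ^ 2) (volume.restrict Ω) →
    WeakCurl3 Ω H cH → WeakDivNT3 Ω H d →
    sqrt (∫ x in Ω, H x ⬝ᵥ H x) ≤
      c * sqrt ((∫ x in Ω, cH x ⬝ᵥ cH x) + ∫ x in Ω, d x ^ 2)}



section AuxProofs

open Set

lemma pd3_contDiff {h : Vec3 → ℝ} (hc : ContDiff ℝ (⊤ : ℕ∞) h) (j : Fin 3) :
    ContDiff ℝ (⊤ : ℕ∞) (pd3 j h) :=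
  (hc.fderiv_right (by simp)).clm_apply contDiff_const

lemma pd3_support {h : Vec3 → ℝ} (j : Fin 3) :
    Function.support (pd3 j h) ⊆ tsupport h := by
  intro x hx
  have : fderiv ℝ h x ≠ 0 := by
    intro h0; apply hx; simp [pd3, h0]
  exact support_fderiv_subset ℝ this

lemma pd3_hcs {h : Vec3 → ℝ} (hs : HasCompactSupport h) (j : Fin 3) :
    HasCompactSupport (pd3 j h) :=
  hs.mono' (pd3_support j)

lemma pd3_zero_of_nmem {h : Vec3 → ℝ} {x : Vec3} (j : Fin 3) (hx : x ∉ tsupport h) :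
    pd3 j h x = 0 := by
  by_contra hne
  exact hx (pd3_support j hne)

lemma integral_pd3 {h : Vec3 → ℝ} (hc : ContDiff ℝ (⊤ : ℕ∞) h) (hs : HasCompactSupport h)
    (j : Fin 3) : ∫ x, pd3 j h x = 0 := by
  obtain ⟨R, hR0, hRs⟩ : ∃ R, 0 < R ∧ tsupport h ⊆ Metric.closedBall 0 R :=
    hs.isBounded.subset_closedBall_lt 0 0
  set a : Vec3 := fun _ => -(R + 1) with ha
  set b : Vec3 := fun _ => (R + 1) with hb
  have hR1 : R ≤ R + 1 := by linarith
  have hball : Metric.closedBall (0 : Vec3) R ⊆ Set.Icc a b := by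
    intro x hx
    have hxn : ‖x‖ ≤ R := by simpa using hx
    constructor <;> intro i <;>
      have := (abs_le.mp ((norm_le_pi_norm x i).trans hxn)) <;>
      simp only [ha, hb] <;> [linarith [this.1]; linarith [this.2]]
  have hab : a ≤ b := fun i => by simp only [ha, hb]; linarith
  have hpdc : Continuous (pd3 j h) := (pd3_contDiff hc j).continuous
  have hfun : (fun x : Vec3 =>
      ∑ i, (if i = j then fderiv ℝ h x else 0 : Vec3 →L[ℝ] ℝ) (Pi.single i 1)) = pd3 j h := by
    funext x
    rw [Finset.sum_eq_single j]
    · simp [pd3]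
    · intro i _ hij; simp [hij]
    · simp
  have hfront : ∀ (i : Fin 3) (c : ℝ), |c| = R + 1 → ∀ y : Fin 2 → ℝ,
      h (Fin.insertNth (α := fun _ => ℝ) i c y) = 0 := by
    intro i c hcv y
    apply image_eq_zero_of_notMem_tsupport
    intro hmem
    have h1 : ‖Fin.insertNth (α := fun _ => ℝ) i c y‖ ≤ R := by
      simpa [dist_zero_right] using hRs hmem
    have h2 : |c| ≤ ‖Fin.insertNth (α := fun _ => ℝ) i c y‖ := by
      have := norm_le_pi_norm (Fin.insertNth (α := fun _ => ℝ) i c y) i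
      simpa [Fin.insertNth_apply_same] using this
    rw [hcv] at h2; linarith
  have key := MeasureTheory.integral_divergence_of_hasFDerivAt_off_countable' a b hab
      (fun i x => if i = j then h x else 0)
      (fun i x => if i = j then fderiv ℝ h x else 0)
      ∅ Set.countable_empty
      (fun i => by
        by_cases hij : i = j
        · simpa [hij] using hc.continuous.continuousOn
        · simp only [hij, if_false]; exact continuousOn_const)
      (fun x _ i => by
        by_cases hij : i = j
        · simpa [hij] using (hc.differentiable (by simp) x).hasFDerivAt
        · simpa [hij] using hasFDerivAt_const (0 : ℝ) x)
      (by rw [hfun]; exact (hpdc.integrable_of_hasCompactSupport (pd3_hcs hs j)).integrableOn)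
  rw [hfun] at key
  have hsub : Function.support (pd3 j h) ⊆ Set.Icc a b :=
    (pd3_support j).trans (hRs.trans hball)
  have hzero : ∀ x ∉ Set.Icc a b, pd3 j h x = 0 := fun x hx => by
    by_contra hne
    exact hx (hsub hne)
  rw [← MeasureTheory.setIntegral_eq_integral_of_forall_compl_eq_zero hzero, key]
  apply Finset.sum_eq_zero
  intro i _
  by_cases hij : i = j
  · have hbz : ∀ y : Fin 2 → ℝ, h (Fin.insertNth (α := fun _ => ℝ) i (b i) y) = 0 := fun y =>
      hfront i (b i) (by simp only [hb]; rw [abs_of_pos (by linarith)]) y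
    have haz : ∀ y : Fin 2 → ℝ, h (Fin.insertNth (α := fun _ => ℝ) i (a i) y) = 0 := fun y =>
      hfront i (a i) (by simp only [ha]; rw [abs_of_neg (by linarith)]; ring) y
    subst hij
    simp [hbz, haz]
  · simp [hij]

lemma ibp3 {f g : Vec3 → ℝ} (hf : ContDiff ℝ (⊤ : ℕ∞) f) (hfs : HasCompactSupport f)
    (hg : ContDiff ℝ (⊤ : ℕ∞) g) (j : Fin 3) :
    ∫ x, f x * pd3 j g x = - ∫ x, pd3 j f x * g x := by
  have hprod : ∀ x, pd3 j (fun y => f y * g y) x = f x * pd3 j g x + pd3 j f x * g x := by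
    intro x
    have hd := fderiv_fun_mul (𝕜 := ℝ) (hf.differentiable (by simp) x) (hg.differentiable (by simp) x)
    simp only [pd3, hd, ContinuousLinearMap.add_apply, ContinuousLinearMap.smul_apply,
      smul_eq_mul]
    ring
  have h0 : ∫ x, pd3 j (fun y => f y * g y) x = 0 :=
    integral_pd3 (hf.mul hg) (hfs.mul_right) j
  simp_rw [hprod] at h0
  have h1 : Integrable (fun x => f x * pd3 j g x) :=
    (hf.continuous.mul (pd3_contDiff hg j).continuous).integrable_of_hasCompactSupport
      hfs.mul_right
  have h2 : Integrable (fun x => pd3 j f x * g x) :=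
    ((pd3_contDiff hf j).continuous.mul hg.continuous).integrable_of_hasCompactSupport
      ((pd3_hcs hfs j).mul_right)
  rw [integral_add h1 h2] at h0
  linarith

end AuxProofs

/-- for a bounded Lipschitz domain with connected boundary
(hence no harmonic Dirichlet fields), c_{m,t} ≥ c_{p,∘}. -/
theorem stmt13
    (Ω : Set Vec3) (hΩo : IsOpen Ω) (hΩb : Bornology.IsBounded Ω) (hΩne : Ω.Nonempty)
    (hΓ : IsConnected (frontier Ω))
    (cp0 cmt : ℝ)
    (hcp0 : IsLeast (PoinZ3 Ω) cp0)
    (hcmt : cmt ∈ MaxTSet Ω) :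
    cp0 ≤ cmt := by
  classical
  obtain ⟨hcmt0, hcmt2⟩ := hcmt
  refine hcp0.2 ⟨hcmt0, ?_⟩
  intro φ hφ hφs hφΩ
  set E : Vec3 → Vec3 := fun x j => if j = 0 then φ x else 0 with hEdef
  set cE : Vec3 → Vec3 := fun x => ![0, pd3 2 φ x, -(pd3 1 φ x)] with hcEdef
  set d : Vec3 → ℝ := pd3 0 φ with hddef
  have hφz : ∀ x ∉ Ω, φ x = 0 := fun x hx =>
    image_eq_zero_of_notMem_tsupport fun hm => hx (hφΩ hm)
  have hpdz : ∀ (j : Fin 3), ∀ x ∉ Ω, pd3 j φ x = 0 := fun j x hx =>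
    pd3_zero_of_nmem j fun hm => hx (hφΩ hm)
  have hpc : ∀ j : Fin 3, Continuous (pd3 j φ) := fun j => (pd3_contDiff hφ j).continuous
  have hint1 : Integrable (fun x => E x ⬝ᵥ E x) (volume.restrict Ω) := by
    have he : (fun x => E x ⬝ᵥ E x) = fun x => φ x * φ x := by
      funext x; simp [hEdef, dotProduct, Fin.sum_univ_three]
    rw [he]
    exact ((hφ.continuous.mul hφ.continuous).integrable_of_hasCompactSupport
      hφs.mul_right).restrict
  have hintc : Integrable (fun x => cE x ⬝ᵥ cE x) (volume.restrict Ω) := by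
    have he : (fun x => cE x ⬝ᵥ cE x)
        = fun x => pd3 2 φ x * pd3 2 φ x + pd3 1 φ x * pd3 1 φ x := by
      funext x; simp [hcEdef, dotProduct, Fin.sum_univ_three]
    rw [he]
    exact ((((hpc 2).mul (hpc 2)).add ((hpc 1).mul (hpc 1))).integrable_of_hasCompactSupport
      (((pd3_hcs hφs 2).mul_right).add ((pd3_hcs hφs 1).mul_right))).restrict
  have hintd : Integrable (fun x => d x ^ 2) (volume.restrict Ω) := by
    have he : (fun x => d x ^ 2) = fun x => pd3 0 φ x * pd3 0 φ x := by
      funext x; simp [hddef]; ring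
    rw [he]
    exact (((hpc 0).mul (hpc 0)).integrable_of_hasCompactSupport
      ((pd3_hcs hφs 0).mul_right)).restrict
  have hWC : WeakCurlTT3 Ω E cE := by
    intro ψ hψ hψs
    have hψi : ∀ i : Fin 3, ContDiff ℝ (⊤ : ℕ∞) fun x => ψ x i := fun i => contDiff_pi.mp hψ i
    have hLpt : ∀ x, E x ⬝ᵥ curl3 ψ x
        = φ x * pd3 1 (fun y => ψ y 2) x - φ x * pd3 2 (fun y => ψ y 1) x := by
      intro x; simp [hEdef, curl3, dotProduct, Fin.sum_univ_three]; ring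
    have hRpt : ∀ x, cE x ⬝ᵥ ψ x
        = pd3 2 φ x * ψ x 1 - pd3 1 φ x * ψ x 2 := by
      intro x; simp [hcEdef, dotProduct, Fin.sum_univ_three]; ring
    have hL : ∫ x in Ω, E x ⬝ᵥ curl3 ψ x
        = ∫ x, (φ x * pd3 1 (fun y => ψ y 2) x - φ x * pd3 2 (fun y => ψ y 1) x) := by
      simp_rw [hLpt]
      exact setIntegral_eq_integral_of_forall_compl_eq_zero fun x hx => by
        rw [hφz x hx]; ring
    have hR : ∫ x in Ω, cE x ⬝ᵥ ψ x
        = ∫ x, (pd3 2 φ x * ψ x 1 - pd3 1 φ x * ψ x 2) := by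
      simp_rw [hRpt]
      exact setIntegral_eq_integral_of_forall_compl_eq_zero fun x hx => by
        rw [hpdz 2 x hx, hpdz 1 x hx]; ring
    rw [hL, hR]
    have J1 : Integrable (fun x => φ x * pd3 1 (fun y => ψ y 2) x) :=
      (hφ.continuous.mul (pd3_contDiff (hψi 2) 1).continuous).integrable_of_hasCompactSupport
        hφs.mul_right
    have J2 : Integrable (fun x => φ x * pd3 2 (fun y => ψ y 1) x) :=
      (hφ.continuous.mul (pd3_contDiff (hψi 1) 2).continuous).integrable_of_hasCompactSupport
        hφs.mul_right
    have K1 : Integrable (fun x => pd3 2 φ x * ψ x 1) :=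
      ((hpc 2).mul (hψi 1).continuous).integrable_of_hasCompactSupport
        ((pd3_hcs hφs 2).mul_right)
    have K2 : Integrable (fun x => pd3 1 φ x * ψ x 2) :=
      ((hpc 1).mul (hψi 2).continuous).integrable_of_hasCompactSupport
        ((pd3_hcs hφs 1).mul_right)
    rw [integral_sub J1 J2, integral_sub K1 K2,
      ibp3 hφ hφs (hψi 2) 1, ibp3 hφ hφs (hψi 1) 2]
    ring
  have hWD : WeakDiv3 Ω E d := by
    intro ψ hψ hψs _
    have hLpt : ∀ x, E x ⬝ᵥ grad3 ψ x = φ x * pd3 0 ψ x := by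
      intro x; simp [hEdef, grad3, dotProduct, Fin.sum_univ_three]
    have hL : ∫ x in Ω, E x ⬝ᵥ grad3 ψ x = ∫ x, φ x * pd3 0 ψ x := by
      simp_rw [hLpt]
      exact setIntegral_eq_integral_of_forall_compl_eq_zero fun x hx => by
        rw [hφz x hx]; ring
    have hRz : ∫ x in Ω, d x * ψ x = ∫ x, pd3 0 φ x * ψ x := by
      exact setIntegral_eq_integral_of_forall_compl_eq_zero fun x hx => by
        rw [show d x = pd3 0 φ x from rfl, hpdz 0 x hx]; ring
    rw [hL, hRz]
    exact ibp3 hφ hφs hψ 0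
  have hsq := hcmt2 E cE d hint1 hintc hintd hWC hWD
  have e1 : ∫ x in Ω, E x ⬝ᵥ E x = ∫ x in Ω, φ x ^ 2 := by
    have h : ∀ x, E x ⬝ᵥ E x = φ x ^ 2 := by
      intro x; simp [hEdef, dotProduct, Fin.sum_univ_three]; ring
    simp_rw [h]
  have e2 : (∫ x in Ω, cE x ⬝ᵥ cE x) + ∫ x in Ω, d x ^ 2
      = ∫ x in Ω, grad3 φ x ⬝ᵥ grad3 φ x := by
    rw [← integral_add hintc hintd]
    have h : ∀ x, cE x ⬝ᵥ cE x + d x ^ 2 = grad3 φ x ⬝ᵥ grad3 φ x := by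
      intro x
      simp [hcEdef, hddef, grad3, dotProduct, Fin.sum_univ_three]
      ring
    simp_rw [h]
  rw [e1, e2] at hsq
  have hP : 0 ≤ ∫ x in Ω, φ x ^ 2 :=
    setIntegral_nonneg hΩo.measurableSet fun x _ => sq_nonneg _
  have hG : 0 ≤ ∫ x in Ω, grad3 φ x ⬝ᵥ grad3 φ x :=
    setIntegral_nonneg hΩo.measurableSet fun x _ => by
      simp only [dotProduct]
      exact Finset.sum_nonneg fun j _ => mul_self_nonneg _
  calc ∫ x in Ω, φ x ^ 2 = sqrt (∫ x in Ω, φ x ^ 2) ^ 2 := (Real.sq_sqrt hP).symm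
    _ ≤ (cmt * sqrt (∫ x in Ω, grad3 φ x ⬝ᵥ grad3 φ x)) ^ 2 :=
        pow_le_pow_left₀ (Real.sqrt_nonneg _) hsq 2
    _ = cmt ^ 2 * ∫ x in Ω, grad3 φ x ⬝ᵥ grad3 φ x := by
        rw [mul_pow, Real.sq_sqrt hG]
end
end

section
/- Let Ω ⊂ ℝ³ be a bounded simply connected Lipschitz domain (so no harmonic Neumann fields). For u ∈ H¹₀(Ω) and a unit vector ξ ∈ ℝ³, the field E = uξ satisfies curl E = ∇u × ξ and div E = ∇u · ξ, hence ‖curl E‖² + ‖div E‖² = ‖∇u‖², and consequently c_{p,∘} ≤ c_{m,n}. -/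
open MeasureTheory Matrix Real

noncomputable section

/-- the cross product on ℝ³. -/
def cross3 (a b : Vec3) : Vec3 :=
  ![a 1 * b 2 - a 2 * b 1, a 2 * b 0 - a 0 * b 2, a 0 * b 1 - a 1 * b 0]


/-! ### Auxiliary lemmas -/

lemma continuous_pd3 {g : Vec3 → ℝ} (hg : ContDiff ℝ (⊤ : ℕ∞) g) (j : Fin 3) :
    Continuous (pd3 j g) :=
  (hg.continuous_fderiv (by simp)).clm_apply continuous_const

lemma hcs_pd3 {f : Vec3 → ℝ} (hfc : HasCompactSupport f) (j : Fin 3) :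
    HasCompactSupport (pd3 j f) :=
  hfc.fderiv_apply (𝕜 := ℝ) (Pi.single j 1)

lemma pd3_eq_zero_outside {f : Vec3 → ℝ} {x : Vec3} (hx : x ∉ tsupport f) (j : Fin 3) :
    pd3 j f x = 0 := by
  have h0 : fderiv ℝ f x = 0 := by
    by_contra h
    exact hx (support_fderiv_subset ℝ (Function.mem_support.2 h))
  simp [pd3, h0]

lemma hcs_dominated {φ : Vec3 → ℝ} {g : Vec3 → ℝ} (hφc : HasCompactSupport φ)
    (h : ∀ x, x ∉ tsupport φ → g x = 0) : HasCompactSupport g :=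
  hφc.of_isClosed_subset isClosed_closure
    (closure_minimal (fun x hx => by
      by_contra hc
      exact hx (h x hc)) (isClosed_tsupport φ))

lemma pd3_sub {f g : Vec3 → ℝ} (hf : ContDiff ℝ (⊤ : ℕ∞) f) (hg : ContDiff ℝ (⊤ : ℕ∞) g)
    (j : Fin 3) (x : Vec3) :
    pd3 j (fun y => f y - g y) x = pd3 j f x - pd3 j g x := by
  simp [pd3, fderiv_fun_sub (hf.differentiable (by simp) x) (hg.differentiable (by simp) x)]

lemma pd3_mul {f g : Vec3 → ℝ} (hf : ContDiff ℝ (⊤ : ℕ∞) f) (hg : ContDiff ℝ (⊤ : ℕ∞) g)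
    (j : Fin 3) (x : Vec3) :
    pd3 j (fun y => f y * g y) x = pd3 j f x * g x + f x * pd3 j g x := by
  have : fderiv ℝ (fun y => f y * g y) x
      = f x • fderiv ℝ g x + g x • fderiv ℝ f x :=
    fderiv_fun_mul (hf.differentiable (by simp) x) (hg.differentiable (by simp) x)
  simp only [pd3, this, ContinuousLinearMap.add_apply, ContinuousLinearMap.smul_apply,
    smul_eq_mul]
  ring

lemma pd3_mul_const {f : Vec3 → ℝ} (hf : ContDiff ℝ (⊤ : ℕ∞) f) (c : ℝ)
    (j : Fin 3) (x : Vec3) :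
    pd3 j (fun y => f y * c) x = pd3 j f x * c := by
  have : fderiv ℝ (fun y => f y * c) x = c • fderiv ℝ f x :=
    fderiv_mul_const (hf.differentiable (by simp) x) c
  simp only [pd3, this, ContinuousLinearMap.smul_apply, smul_eq_mul]
  ring

lemma ibp_global {f g : Vec3 → ℝ} (hf : ContDiff ℝ (⊤ : ℕ∞) f) (hfc : HasCompactSupport f)
    (hg : ContDiff ℝ (⊤ : ℕ∞) g) (j : Fin 3) :
    ∫ x, f x * pd3 j g x = - ∫ x, pd3 j f x * g x := by
  apply integral_mul_fderiv_eq_neg_fderiv_mul_of_integrable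
  · exact (((continuous_pd3 hf j).mul (hg.continuous)).integrable_of_hasCompactSupport
      ((hcs_pd3 hfc j).mul_right))
  · exact ((hf.continuous.mul (continuous_pd3 hg j)).integrable_of_hasCompactSupport
      (hfc.mul_right))
  · exact ((hf.continuous.mul hg.continuous).integrable_of_hasCompactSupport hfc.mul_right)
  · exact fun x _ => hf.differentiable (by simp) x
  · exact fun x _ => hg.differentiable (by simp) x

lemma integral_pd3_zero {Ω : Set Vec3} {h : Vec3 → ℝ} (hh : ContDiff ℝ (⊤ : ℕ∞) h)
    (hhc : HasCompactSupport h) (hhΩ : tsupport h ⊆ Ω) (j : Fin 3) :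
    ∫ x in Ω, pd3 j h x = 0 := by
  rw [setIntegral_eq_integral_of_forall_compl_eq_zero (f := fun x => pd3 j h x)
    (fun x hx => pd3_eq_zero_outside (fun hm => hx (hhΩ hm)) j)]
  have := ibp_global (g := fun _ => (1:ℝ)) hh hhc contDiff_const j
  have hz : ∀ x : Vec3, pd3 j (fun _ : Vec3 => (1:ℝ)) x = 0 := by
    intro x; simp [pd3, fderiv_const]
  simp only [hz, mul_zero, mul_one, integral_zero] at this
  linarith [this]

/-- master IBP lemma: if `A = ∑ⱼ ∂ⱼ (φ * gⱼ)` with `φ` a test function supported in `Ω`,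
then `∫_Ω A = 0`. -/
lemma integral_div_form_zero {Ω : Set Vec3} {φ : Vec3 → ℝ} (hφ : ContDiff ℝ (⊤ : ℕ∞) φ)
    (hφc : HasCompactSupport φ) (hφΩ : tsupport φ ⊆ Ω)
    (g : Fin 3 → Vec3 → ℝ) (hg : ∀ j, ContDiff ℝ (⊤ : ℕ∞) (g j))
    (A : Vec3 → ℝ)
    (hA : ∀ x, A x = ∑ j, pd3 j (fun y => φ y * g j y) x) :
    ∫ x in Ω, A x = 0 := by
  have key : ∀ j : Fin 3, ∫ x in Ω, pd3 j (fun y => φ y * g j y) x = 0 := by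
    intro j
    refine integral_pd3_zero (hφ.mul (hg j)) (hφc.mul_right) ?_ j
    refine (closure_minimal (fun x hx => subset_tsupport φ ?_) (isClosed_tsupport φ)).trans hφΩ
    exact left_ne_zero_of_mul hx
  calc ∫ x in Ω, A x = ∫ x in Ω, ∑ j, pd3 j (fun y => φ y * g j y) x :=
        integral_congr_ae (Filter.Eventually.of_forall (fun x => hA x))
    _ = ∑ j : Fin 3, ∫ x in Ω, pd3 j (fun y => φ y * g j y) x := by
        refine integral_finset_sum _ (fun j _ => ?_)
        exact ((continuous_pd3 (hφ.mul (hg j)) j).integrable_of_hasCompactSupport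
          (hcs_pd3 hφc.mul_right j)).restrict
    _ = 0 := by simp [key]

lemma lagrange3 {ξ : Vec3} (hξ : ξ ⬝ᵥ ξ = 1) (g : Vec3) :
    cross3 g ξ ⬝ᵥ cross3 g ξ + (g ⬝ᵥ ξ) ^ 2 = g ⬝ᵥ g := by
  simp only [cross3, dotProduct, Fin.sum_univ_three, Matrix.cons_val_zero,
    Matrix.cons_val_one, Matrix.head_cons, Matrix.cons_val_two, Matrix.tail_cons] at hξ ⊢
  linear_combination (g 0 ^ 2 + g 1 ^ 2 + g 2 ^ 2) * hξ

/-- for u ∈ H¹₀(Ω) and a unit vector ξ, the field E = uξ satisfies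
curl E = ∇u × ξ and div E = ∇u·ξ, hence ‖curl E‖² + ‖div E‖² = ‖∇u‖²; consequently
c_{p,∘} ≤ c_{m,n} for a bounded simply connected Lipschitz domain. -/
theorem stmt14
    (Ω : Set Vec3) (hΩo : IsOpen Ω) (hΩb : Bornology.IsBounded Ω) (hΩne : Ω.Nonempty)
    (hΩsc : SimplyConnectedSpace Ω)
    (u : Vec3 → ℝ) (hu : ContDiff ℝ (⊤ : ℕ∞) u) (husupp : HasCompactSupport u)
    (huΩ : tsupport u ⊆ Ω)
    (ξ : Vec3) (hξ : ξ ⬝ᵥ ξ = 1) :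
    (∀ x, curl3 (fun y => fun i => u y * ξ i) x = cross3 (grad3 u x) ξ) ∧
    (∀ x, div3 (fun y => fun i => u y * ξ i) x = grad3 u x ⬝ᵥ ξ) ∧
    ((∫ x in Ω, (curl3 (fun y => fun i => u y * ξ i) x ⬝ᵥ
        curl3 (fun y => fun i => u y * ξ i) x +
        div3 (fun y => fun i => u y * ξ i) x ^ 2)) =
      ∫ x in Ω, grad3 u x ⬝ᵥ grad3 u x) ∧
    (∀ cp0 cmn : ℝ, IsLeast (PoinZ3 Ω) cp0 → cmn ∈ MaxNSet Ω → cp0 ≤ cmn) := by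
  have hξ' := hξ
  simp only [dotProduct, Fin.sum_univ_three] at hξ'
  have curl_eq : ∀ v : Vec3 → ℝ, ContDiff ℝ (⊤ : ℕ∞) v → ∀ x,
      curl3 (fun y => fun i => v y * ξ i) x = cross3 (grad3 v x) ξ := by
    intro v hv x
    funext i
    fin_cases i <;> simp [curl3, cross3, grad3, pd3_mul_const hv, mul_comm]
  have div_eq : ∀ v : Vec3 → ℝ, ContDiff ℝ (⊤ : ℕ∞) v → ∀ x,
      div3 (fun y => fun i => v y * ξ i) x = grad3 v x ⬝ᵥ ξ := by
    intro v hv x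
    simp [div3, grad3, dotProduct, Fin.sum_univ_three, pd3_mul_const hv]
  refine ⟨curl_eq u hu, div_eq u hu, ?_, ?_⟩
  · refine integral_congr_ae (Filter.Eventually.of_forall (fun x => ?_))
    dsimp only
    rw [curl_eq u hu x, div_eq u hu x]
    exact lagrange3 hξ (grad3 u x)
  · intro cp0 cmn hleast hmn
    apply hleast.2
    refine ⟨hmn.1, ?_⟩
    intro φ hφ hφc hφΩ
    have hcφ : Continuous φ := hφ.continuous
    have hp0 : Continuous (pd3 0 φ) := continuous_pd3 hφ 0
    have hp1 : Continuous (pd3 1 φ) := continuous_pd3 hφ 1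
    have hp2 : Continuous (pd3 2 φ) := continuous_pd3 hφ 2
    -- integrability of |E|², |curl E|², (div E)²
    have int1 : Integrable (fun x => (fun i => φ x * ξ i) ⬝ᵥ (fun i => φ x * ξ i))
        (volume.restrict Ω) := by
      refine (Continuous.integrable_of_hasCompactSupport ?_ ?_).restrict
      · simp only [dotProduct, Fin.sum_univ_three]; fun_prop
      · refine hcs_dominated hφc (fun x hx => ?_)
        simp [dotProduct, image_eq_zero_of_notMem_tsupport hx]
    have int2 : Integrable
        (fun x => cross3 (grad3 φ x) ξ ⬝ᵥ cross3 (grad3 φ x) ξ) (volume.restrict Ω) := by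
      refine (Continuous.integrable_of_hasCompactSupport ?_ ?_).restrict
      · simp only [cross3, grad3, dotProduct, Fin.sum_univ_three, Matrix.cons_val_zero,
          Matrix.cons_val_one, Matrix.head_cons, Matrix.cons_val_two, Matrix.tail_cons]
        fun_prop
      · refine hcs_dominated hφc (fun x hx => ?_)
        simp [cross3, grad3, dotProduct, Fin.sum_univ_three,
          pd3_eq_zero_outside hx]
    have int3 : Integrable (fun x => (grad3 φ x ⬝ᵥ ξ) ^ 2) (volume.restrict Ω) := by
      refine (Continuous.integrable_of_hasCompactSupport ?_ ?_).restrict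
      · simp only [grad3, dotProduct, Fin.sum_univ_three]; fun_prop
      · refine hcs_dominated hφc (fun x hx => ?_)
        simp [grad3, dotProduct, Fin.sum_univ_three, pd3_eq_zero_outside hx]
    -- weak curl
    have wc : WeakCurl3 Ω (fun y => fun i => φ y * ξ i) (fun x => cross3 (grad3 φ x) ξ) := by
      intro ψ hψ hψc hψΩ
      have hψk : ∀ k, ContDiff ℝ (⊤ : ℕ∞) (fun y => ψ y k) := fun k => (contDiff_pi.1 hψ k)
      have hcψ0 : Continuous (fun y => ψ y 0) := (hψk 0).continuous
      have hcψ1 : Continuous (fun y => ψ y 1) := (hψk 1).continuous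
      have hcψ2 : Continuous (fun y => ψ y 2) := (hψk 2).continuous
      have hq : ∀ j k : Fin 3, Continuous (pd3 j (fun y => ψ y k)) :=
        fun j k => continuous_pd3 (hψk k) j
      have intA : Integrable (fun x => (fun i => φ x * ξ i) ⬝ᵥ curl3 ψ x)
          (volume.restrict Ω) := by
        refine (Continuous.integrable_of_hasCompactSupport ?_ ?_).restrict
        · simp only [curl3, dotProduct, Fin.sum_univ_three, Matrix.cons_val_zero,
            Matrix.cons_val_one, Matrix.head_cons, Matrix.cons_val_two, Matrix.tail_cons]
          have := hq 0 1; have := hq 0 2; have := hq 1 0; have := hq 1 2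
          have := hq 2 0; have := hq 2 1
          fun_prop
        · refine hcs_dominated hφc (fun x hx => ?_)
          simp [dotProduct, Fin.sum_univ_three, image_eq_zero_of_notMem_tsupport hx]
      have intB : Integrable (fun x => cross3 (grad3 φ x) ξ ⬝ᵥ ψ x)
          (volume.restrict Ω) := by
        refine (Continuous.integrable_of_hasCompactSupport ?_ ?_).restrict
        · simp only [cross3, grad3, dotProduct, Fin.sum_univ_three, Matrix.cons_val_zero,
            Matrix.cons_val_one, Matrix.head_cons, Matrix.cons_val_two, Matrix.tail_cons]
          fun_prop
        · refine hcs_dominated hφc (fun x hx => ?_)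
          simp [cross3, grad3, dotProduct, Fin.sum_univ_three, pd3_eq_zero_outside hx]
      rw [← sub_eq_zero, ← integral_sub intA intB]
      refine integral_div_form_zero hφ hφc hφΩ
        ![fun y => ψ y 1 * ξ 2 - ψ y 2 * ξ 1,
          fun y => ψ y 2 * ξ 0 - ψ y 0 * ξ 2,
          fun y => ψ y 0 * ξ 1 - ψ y 1 * ξ 0] ?_ _ ?_
      · intro j
        fin_cases j <;>
          simp only [Matrix.cons_val_zero, Matrix.cons_val_one, Matrix.head_cons,
            Matrix.cons_val_two, Matrix.tail_cons] <;>
          exact ContDiff.sub (ContDiff.mul (hψk _) contDiff_const)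
            (ContDiff.mul (hψk _) contDiff_const)
      · intro x
        have e : ∀ (j a b : Fin 3) (ca cb : ℝ),
            pd3 j (fun y => φ y * (ψ y a * ca - ψ y b * cb)) x
              = pd3 j φ x * (ψ x a * ca - ψ x b * cb)
                + φ x * (pd3 j (fun y => ψ y a) x * ca - pd3 j (fun y => ψ y b) x * cb) := by
          intro j a b ca cb
          rw [pd3_mul hφ (((hψk a).mul contDiff_const).sub ((hψk b).mul contDiff_const)),
            pd3_sub ((hψk a).mul contDiff_const) ((hψk b).mul contDiff_const),
            pd3_mul_const (hψk a), pd3_mul_const (hψk b)]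
        simp only [Fin.sum_univ_three, Matrix.cons_val_zero, Matrix.cons_val_one,
          Matrix.head_cons, Matrix.cons_val_two, Matrix.tail_cons, curl3, cross3, grad3,
          dotProduct]
        rw [e 0 1 2 (ξ 2) (ξ 1), e 1 2 0 (ξ 0) (ξ 2), e 2 0 1 (ξ 1) (ξ 0)]
        ring
    -- weak divergence with vanishing normal trace
    have wd : WeakDivNT3 Ω (fun y => fun i => φ y * ξ i) (fun x => grad3 φ x ⬝ᵥ ξ) := by
      intro ψ hψ hψc
      have hcψ : Continuous ψ := hψ.continuous
      have hq : ∀ j : Fin 3, Continuous (pd3 j ψ) := fun j => continuous_pd3 hψ j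
      have intA : Integrable (fun x => (fun i => φ x * ξ i) ⬝ᵥ grad3 ψ x)
          (volume.restrict Ω) := by
        refine (Continuous.integrable_of_hasCompactSupport ?_ ?_).restrict
        · simp only [grad3, dotProduct, Fin.sum_univ_three]
          have := hq 0; have := hq 1; have := hq 2
          fun_prop
        · refine hcs_dominated hφc (fun x hx => ?_)
          simp [grad3, dotProduct, Fin.sum_univ_three, image_eq_zero_of_notMem_tsupport hx]
      have intB : Integrable (fun x => (grad3 φ x ⬝ᵥ ξ) * ψ x) (volume.restrict Ω) := by
        refine (Continuous.integrable_of_hasCompactSupport ?_ ?_).restrict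
        · simp only [grad3, dotProduct, Fin.sum_univ_three]
          fun_prop
        · refine hcs_dominated hφc (fun x hx => ?_)
          simp [grad3, dotProduct, Fin.sum_univ_three, pd3_eq_zero_outside hx]
      rw [eq_neg_iff_add_eq_zero, ← integral_add intA intB]
      refine integral_div_form_zero hφ hφc hφΩ (fun j => fun y => ψ y * ξ j) ?_ _ ?_
      · intro j; exact hψ.mul contDiff_const
      · intro x
        have e : ∀ j : Fin 3,
            pd3 j (fun y => φ y * (ψ y * ξ j)) x
              = pd3 j φ x * (ψ x * ξ j) + φ x * (pd3 j ψ x * ξ j) := by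
          intro j
          rw [pd3_mul hφ (hψ.mul contDiff_const), pd3_mul_const hψ]
        simp only [Fin.sum_univ_three, grad3, dotProduct]
        rw [e 0, e 1, e 2]
        ring
    have hmain := hmn.2 (fun y => fun i => φ y * ξ i) (fun x => cross3 (grad3 φ x) ξ)
      (fun x => grad3 φ x ⬝ᵥ ξ) int1 int2 int3 wc wd
    have e1 : (∫ x in Ω, (fun i => φ x * ξ i) ⬝ᵥ (fun i => φ x * ξ i))
        = ∫ x in Ω, φ x ^ 2 := by
      refine integral_congr_ae (Filter.Eventually.of_forall (fun x => ?_))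
      simp only [dotProduct, Fin.sum_univ_three]
      linear_combination (φ x ^ 2) * hξ'
    have e2 : ((∫ x in Ω, cross3 (grad3 φ x) ξ ⬝ᵥ cross3 (grad3 φ x) ξ)
          + ∫ x in Ω, (grad3 φ x ⬝ᵥ ξ) ^ 2)
        = ∫ x in Ω, grad3 φ x ⬝ᵥ grad3 φ x := by
      rw [← integral_add int2 int3]
      exact integral_congr_ae (Filter.Eventually.of_forall
        (fun x => lagrange3 hξ (grad3 φ x)))
    rw [e1, e2] at hmain
    have h1 : 0 ≤ ∫ x in Ω, φ x ^ 2 :=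
      setIntegral_nonneg hΩo.measurableSet (fun x _ => sq_nonneg _)
    have h2 : 0 ≤ ∫ x in Ω, grad3 φ x ⬝ᵥ grad3 φ x := by
      refine setIntegral_nonneg hΩo.measurableSet (fun x _ => ?_)
      simp only [dotProduct, Fin.sum_univ_three]
      nlinarith [mul_self_nonneg (pd3 0 φ x), mul_self_nonneg (pd3 1 φ x),
        mul_self_nonneg (pd3 2 φ x), mul_self_nonneg (grad3 φ x 0),
        mul_self_nonneg (grad3 φ x 1), mul_self_nonneg (grad3 φ x 2)]
    calc (∫ x in Ω, φ x ^ 2) = sqrt (∫ x in Ω, φ x ^ 2) ^ 2 := (sq_sqrt h1).symm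
      _ ≤ (cmn * sqrt (∫ x in Ω, grad3 φ x ⬝ᵥ grad3 φ x)) ^ 2 :=
          pow_le_pow_left₀ (sqrt_nonneg _) hmain 2
      _ = cmn ^ 2 * ∫ x in Ω, grad3 φ x ⬝ᵥ grad3 φ x := by
          rw [mul_pow, sq_sqrt h2]
end
end
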